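/- Let ψ: [0,1]^{s−1} → ℝ_+ (s ≥ 2) be a bounded measurable function with ψ(x) ≤ L for all x, C := ∫_{[0,1]^{s−1}} ψ > 0, and let A = {x ∈ [0,1]^s : ψ(x_1,…,x_{s−1}) ≥ L·x_s}. Suppose A is pseudo-convex with an admissible convex covering of p parts and q convex parts, and suppose for every t ∈ [0,1]^{s−1} the set J_t^* = ([0,t) × [0,1]) ∩ A is pseudo-convex with admissible covering of at most p parts and at least q convex parts. Let P_M^{(s)} = {x_0,…,x_{M−1}} ⊆ [0,1]^s be a point set with isotropic discrepancy J_M. Let N = ∑_{n=0}^{M−1} 1_A(x_n) and let y_0,…,y_{N−1} ∈ [0,1]^{s−1} be the first s−1 coordinates of the accepted points (those x_n ∈ A). Then D_{N,ψ}^* ≤ (M/N)·2·(2p−q)·J_M(P_M^{(s)}). -/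

import Mathlib

/-!
A point `y_k` lies in `[0, t)` exactly when the point `x_n` it came from lies in `J_t^*`, so the
empirical measure of `[0, t)` is the ratio `a / b` of the empirical frequencies of `J_t^*` and `A`,
while by Cavalieri the target measure is the ratio `u / v` of their volumes. Pseudo-convexity gives
`|a - u|, |b - v| ≤ (2p - q) J_M`, and since `0 ≤ u ≤ v`,
`a / b - u / v = ((a - u) - (u / v) (b - v)) / b` is at most `2 (2p - q) J_M / b` in absolute
value, where `b = N / M`.
-/

open MeasureTheory Set
open scoped ENNReal

/-- The unit cube `[0,1]^s`. -/
def unitCube (s : ℕ) : Set (Fin s → ℝ) := Set.univ.pi fun _ => Set.Icc (0 : ℝ) 1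

/-- The anchored box `[0, t) = ∏_{i} [0, t_i)` in dimension `d`. -/
def anchoredBox (d : ℕ) (t : Fin d → ℝ) : Set (Fin d → ℝ) :=
  Set.univ.pi fun i => Set.Ico 0 (t i)

/-- The region `A = {x ∈ [0,1]^{d+1} : ψ(x_1,…,x_d) ≥ L x_{d+1}}` below the graph of `ψ/L`. -/
def lowerGraph (d : ℕ) (L : ℝ) (ψ : (Fin d → ℝ) → ℝ) : Set (Fin (d + 1) → ℝ) :=
  {x | x ∈ unitCube (d + 1) ∧ L * x (Fin.last d) ≤ ψ fun i => x i.castSucc}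

/-- The test set `J_t^* = ([0,t) × [0,1]) ∩ A`. -/
def Jstar (d : ℕ) (L : ℝ) (ψ : (Fin d → ℝ) → ℝ) (t : Fin d → ℝ) : Set (Fin (d + 1) → ℝ) :=
  {x | (fun i => x i.castSucc) ∈ anchoredBox d t ∧ x (Fin.last d) ∈ Set.Icc (0 : ℝ) 1}
    ∩ lowerGraph d L ψ

/-- `A0` is a pseudo-convex subset of `[0,1]^s` with an admissible convex covering of
`p` parts, `q` of which are convex parts of `A0`. -/
def AdmissCover {s : ℕ} (p q : ℕ) (A0 : Set (Fin s → ℝ)) : Prop :=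
  q ≤ p ∧ ∃ A : Fin p → Set (Fin s → ℝ),
    (∀ j, Convex ℝ (A j)) ∧ (∀ j, A j ⊆ unitCube s) ∧
    (∀ i j, i ≠ j → Disjoint (A i) (A j)) ∧ A0 ⊆ (⋃ j, A j) ∧
    (∀ j : Fin p, (j : ℕ) < q → A j ⊆ A0) ∧ (∀ j : Fin p, q ≤ (j : ℕ) → Convex ℝ (A j \ A0))

/-- Local discrepancy `|(1/N) ∑ 1_B(x_n) - λ(B)|`. -/
noncomputable def empDisc {s : ℕ} (N : ℕ) (x : Fin N → (Fin s → ℝ))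
    (B : Set (Fin s → ℝ)) : ℝ :=
  |(1 / (N : ℝ)) * ∑ n, Set.indicator B (fun _ => (1 : ℝ)) (x n) - (volume B).toReal|

/-- Isotropic discrepancy: supremum of the local discrepancy over convex subsets of the cube. -/
noncomputable def isoDisc {s : ℕ} (N : ℕ) (x : Fin N → (Fin s → ℝ)) : ℝ :=
  sSup {r : ℝ | ∃ J : Set (Fin s → ℝ), Convex ℝ J ∧ J ⊆ unitCube s ∧ r = empDisc N x J}


open Function

lemma measurableSet_unitCube (s : ℕ) : MeasurableSet (unitCube s) :=
  .univ_pi fun _ => measurableSet_Icc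

lemma measurableSet_anchoredBox (d : ℕ) (t : Fin d → ℝ) : MeasurableSet (anchoredBox d t) :=
  .univ_pi fun _ => measurableSet_Ico

lemma volume_unitCube (s : ℕ) : volume (unitCube s) = 1 := by
  rw [unitCube, volume_pi_pi]
  simp

lemma volume_ne_top_of_subset_unitCube {s : ℕ} {B : Set (Fin s → ℝ)} (hB : B ⊆ unitCube s) :
    volume B ≠ ⊤ :=
  ((measure_mono hB).trans_eq (volume_unitCube s)).trans_lt ENNReal.one_lt_top |>.ne

section Discrepancy

variable {s : ℕ} (M : ℕ) (x : Fin M → (Fin s → ℝ))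

noncomputable def signedDisc (B : Set (Fin s → ℝ)) : ℝ :=
  (1 / (M : ℝ)) * ∑ n, B.indicator (fun _ => (1 : ℝ)) (x n) - (volume B).toReal

lemma empDisc_eq_abs_signedDisc (B : Set (Fin s → ℝ)) :
    empDisc M x B = |signedDisc M x B| := rfl

lemma signedDisc_diff {B B' : Set (Fin s → ℝ)} (hB' : B' ⊆ B) (hm : NullMeasurableSet B')
    (hfin : volume B ≠ ⊤) :
    signedDisc M x (B \ B') = signedDisc M x B - signedDisc M x B' := by
  have hind : ∀ v, (B \ B').indicator (fun _ => (1 : ℝ)) v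
      = B.indicator (fun _ => 1) v - B'.indicator (fun _ => 1) v := by
    intro v
    by_cases hv : v ∈ B'
    · simp [hv, hB' hv]
    · by_cases hv' : v ∈ B <;> simp [hv, hv']
  have hvol : (volume (B \ B')).toReal = (volume B).toReal - (volume B').toReal := by
    rw [measure_sdiff hB' hm (ne_top_of_le_ne_top hfin (measure_mono hB')),
      ENNReal.toReal_sub_of_le (measure_mono hB') hfin]
  simp only [signedDisc, hind, Finset.sum_sub_distrib, hvol]
  ring

lemma signedDisc_iUnion {ι : Type*} [Fintype ι] {A : ι → Set (Fin s → ℝ)}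
    (hdisj : Pairwise (Disjoint on A)) (hm : ∀ i, NullMeasurableSet (A i))
    (hfin : ∀ i, volume (A i) ≠ ⊤) :
    signedDisc M x (⋃ i, A i) = ∑ i, signedDisc M x (A i) := by
  have hind : ∀ v, (⋃ i, A i).indicator (fun _ => (1 : ℝ)) v
      = ∑ i, (A i).indicator (fun _ => 1) v := by
    intro v
    have hdisj' : ((Finset.univ : Finset ι) : Set ι).PairwiseDisjoint A := by
      rw [Finset.coe_univ]
      exact hdisj.set_pairwise univ
    simpa using Finset.indicator_biUnion_apply Finset.univ A hdisj' v
  have hvol : (volume (⋃ i, A i)).toReal = ∑ i, (volume (A i)).toReal := by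
    rw [measure_iUnion₀ (fun i j hij => (hdisj hij).aedisjoint) hm, tsum_fintype,
      ENNReal.toReal_sum fun i _ => hfin i]
  simp only [signedDisc, hind, hvol, Finset.sum_sub_distrib, Finset.mul_sum]
  rw [Finset.sum_comm]

lemma empDisc_le_two {B : Set (Fin s → ℝ)} (hB : B ⊆ unitCube s) : empDisc M x B ≤ 2 := by
  have hcount : ∑ n, B.indicator (fun _ => (1 : ℝ)) (x n) ≤ M := by
    calc ∑ n, B.indicator (fun _ => (1 : ℝ)) (x n) ≤ ∑ _n : Fin M, (1 : ℝ) :=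
          Finset.sum_le_sum fun n _ => indicator_le_self' (fun _ _ => zero_le_one) _
      _ = M := by simp
  have hfreq : (1 / (M : ℝ)) * ∑ n, B.indicator (fun _ => (1 : ℝ)) (x n) ≤ 1 := by
    rcases M.eq_zero_or_pos with rfl | hM
    · simp
    · rw [one_div, inv_mul_le_iff₀ (by exact_mod_cast hM), mul_one]
      exact hcount
  have hfreq0 : 0 ≤ (1 / (M : ℝ)) * ∑ n, B.indicator (fun _ => (1 : ℝ)) (x n) :=
    mul_nonneg (by positivity) (Finset.sum_nonneg fun n _ => indicator_nonneg (by simp) _)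
  have hvol : (volume B).toReal ≤ 1 := by
    simpa [volume_unitCube] using
      ENNReal.toReal_mono (volume_ne_top_of_subset_unitCube le_rfl) (measure_mono hB)
  rw [empDisc, abs_sub_le_iff]
  constructor <;> linarith [ENNReal.toReal_nonneg (a := volume B)]

lemma empDisc_le_isoDisc {J : Set (Fin s → ℝ)} (hJ : Convex ℝ J) (hJc : J ⊆ unitCube s) :
    empDisc M x J ≤ isoDisc M x :=
  le_csSup ⟨2, by rintro r ⟨J', -, hJ', rfl⟩; exact empDisc_le_two M x hJ'⟩
    ⟨J, hJ, hJc, rfl⟩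

lemma isoDisc_nonneg : 0 ≤ isoDisc M x :=
  (abs_nonneg _).trans (empDisc_le_isoDisc M x convex_empty (empty_subset _))

lemma empDisc_diff_le_two_mul_isoDisc {P Q : Set (Fin s → ℝ)} (hP : Convex ℝ P)
    (hPc : P ⊆ unitCube s) (hQ : Convex ℝ Q) (hQP : Q ⊆ P) :
    empDisc M x (P \ Q) ≤ 2 * isoDisc M x := by
  rw [empDisc_eq_abs_signedDisc, signedDisc_diff M x hQP (hQ.nullMeasurableSet _)
    (volume_ne_top_of_subset_unitCube hPc)]
  have hPdisc := empDisc_le_isoDisc M x hP hPc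
  have hQdisc := empDisc_le_isoDisc M x hQ (hQP.trans hPc)
  rw [empDisc_eq_abs_signedDisc] at hPdisc hQdisc
  linarith [abs_sub (signedDisc M x P) (signedDisc M x Q)]

lemma sum_fin_ite_lt {α : Type*} [AddCommMonoid α] {p q : ℕ} (hqp : q ≤ p) (a b : α) :
    ∑ j : Fin p, (if (j : ℕ) < q then a else b) = q • a + (p - q) • b := by
  obtain ⟨r, rfl⟩ := Nat.exists_eq_add_of_le hqp
  rw [Fin.sum_univ_eq_sum_range (fun j => if j < q then a else b), Finset.sum_range_add]
  simp [Finset.sum_ite_of_true]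

/-- Of the `p` pieces `A j ∩ B`, the `q` inner ones are convex and each of the others is a
difference of two convex sets. -/
theorem empDisc_le_of_admissCover {p q : ℕ} {B : Set (Fin s → ℝ)} (h : AdmissCover p q B) :
    empDisc M x B ≤ (2 * p - q) * isoDisc M x := by
  obtain ⟨hqp, A, hconv, hsub, hdisj, hcover, hin, hout⟩ := h
  set D := isoDisc M x
  have hpiece : ∀ j, NullMeasurableSet (A j ∩ B) ∧
      empDisc M x (A j ∩ B) ≤ if (j : ℕ) < q then D else 2 * D := by
    intro j
    split_ifs with hj
    · rw [inter_eq_left.2 (hin j hj)]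
      exact ⟨(hconv j).nullMeasurableSet _, empDisc_le_isoDisc M x (hconv j) (hsub j)⟩
    · have hj' := hout j (not_lt.1 hj)
      rw [← sdiff_sdiff_right_self]
      exact ⟨((hconv j).nullMeasurableSet _).diff (hj'.nullMeasurableSet _),
        empDisc_diff_le_two_mul_isoDisc M x (hconv j) (hsub j) hj' sdiff_subset⟩
  have hB : B = ⋃ j, A j ∩ B := by
    rw [← iUnion_inter, inter_eq_right.2 hcover]
  have hsplit : signedDisc M x B = ∑ j, signedDisc M x (A j ∩ B) := by
    conv_lhs => rw [hB]
    exact signedDisc_iUnion M x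
      (fun i j hij => (hdisj i j hij).mono inter_subset_left inter_subset_left)
      (fun j => (hpiece j).1)
      (fun j => volume_ne_top_of_subset_unitCube (inter_subset_left.trans (hsub j)))
  calc empDisc M x B ≤ ∑ j, empDisc M x (A j ∩ B) := by
        rw [empDisc_eq_abs_signedDisc, hsplit]
        exact Finset.abs_sum_le_sum_abs _ _
    _ ≤ ∑ j : Fin p, if (j : ℕ) < q then D else 2 * D :=
        Finset.sum_le_sum fun j _ => (hpiece j).2
    _ = (2 * p - q) * D := by
        rw [sum_fin_ite_lt hqp, nsmul_eq_mul, nsmul_eq_mul, Nat.cast_sub hqp]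
        ring

theorem empDisc_le_of_admissCover_of_le {p q p' q' : ℕ} {B : Set (Fin s → ℝ)}
    (h : AdmissCover p' q' B) (hp : p' ≤ p) (hq : q ≤ q') :
    empDisc M x B ≤ (2 * p - q) * isoDisc M x := by
  refine (empDisc_le_of_admissCover M x h).trans
    (mul_le_mul_of_nonneg_right ?_ (isoDisc_nonneg M x))
  have : (p' : ℝ) ≤ p := by exact_mod_cast hp
  have : (q : ℝ) ≤ q' := by exact_mod_cast hq
  linarith

end Discrepancy

lemma sum_comp_equiv_subtype {ι κ α R : Type*} [Fintype ι] [Fintype κ] [AddCommMonoid R]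
    {x : ι → α} {A : Set α} (e : κ ≃ {i // x i ∈ A}) (f : α → R) :
    ∑ k, f (x (e k)) = ∑ i, A.indicator f (x i) := by
  classical
  rw [Equiv.sum_comp e (fun i : {i // x i ∈ A} => f (x i)), Finset.sum_indicator_eq_sum_filter]
  exact (Finset.sum_subtype _ (by simp) (fun i => f (x i))).symm

section LowerGraph

variable {d : ℕ} {L : ℝ} {ψ : (Fin d → ℝ) → ℝ}

def lowerGraphOver (d : ℕ) (L : ℝ) (ψ : (Fin d → ℝ) → ℝ) (S : Set (Fin d → ℝ)) :
    Set (Fin (d + 1) → ℝ) :=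
  {x | (fun i => x i.castSucc) ∈ S ∧ x (Fin.last d) ∈ Icc (0 : ℝ) 1 ∧
    L * x (Fin.last d) ≤ ψ fun i => x i.castSucc}

lemma mem_unitCube_succ_iff (x : Fin (d + 1) → ℝ) :
    x ∈ unitCube (d + 1) ↔
      (fun i => x i.castSucc) ∈ unitCube d ∧ x (Fin.last d) ∈ Icc (0 : ℝ) 1 := by
  simp only [unitCube, mem_pi, mem_univ, forall_const]
  exact ⟨fun h => ⟨fun i => h _, h _⟩, fun h i => Fin.lastCases h.2 h.1 i⟩

lemma lowerGraph_eq_lowerGraphOver : lowerGraph d L ψ = lowerGraphOver d L ψ (unitCube d) := by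
  ext x
  simp only [lowerGraph, lowerGraphOver, mem_ofPred_eq, mem_unitCube_succ_iff, and_assoc]

lemma anchoredBox_subset_unitCube {t : Fin d → ℝ} (ht : t ∈ unitCube d) :
    anchoredBox d t ⊆ unitCube d :=
  fun _ hz i _ => ⟨(hz i trivial).1, (hz i trivial).2.le.trans (ht i trivial).2⟩

lemma Jstar_eq_lowerGraphOver {t : Fin d → ℝ} (ht : t ∈ unitCube d) :
    Jstar d L ψ t = lowerGraphOver d L ψ (anchoredBox d t) := by
  ext x
  simp only [Jstar, lowerGraph_eq_lowerGraphOver, lowerGraphOver, mem_inter_iff, mem_ofPred_eq]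
  exact ⟨fun ⟨⟨hS, hI⟩, _, _, hψ⟩ => ⟨hS, hI, hψ⟩,
    fun ⟨hS, hI, hψ⟩ => ⟨⟨hS, hI⟩, anchoredBox_subset_unitCube ht hS, hI, hψ⟩⟩

lemma Jstar_eq_inter_preimage (t : Fin d → ℝ) :
    Jstar d L ψ t
      = lowerGraph d L ψ ∩ (fun x i => x (Fin.castSucc i)) ⁻¹' anchoredBox d t := by
  ext x
  simp only [Jstar, mem_inter_iff, mem_ofPred_eq, mem_preimage]
  exact ⟨fun ⟨⟨hS, _⟩, hA⟩ => ⟨hA, hS⟩,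
    fun ⟨hA, hS⟩ => ⟨⟨hS, ((mem_unitCube_succ_iff x).1 hA.1).2⟩, hA⟩⟩

lemma sum_indicator_anchoredBox_accepted {M N : ℕ} {x : Fin M → Fin (d + 1) → ℝ}
    (e : Fin N ≃ {n // x n ∈ lowerGraph d L ψ}) (t : Fin d → ℝ) :
    ∑ k, (anchoredBox d t).indicator (fun _ => (1 : ℝ)) (fun i => x (e k) i.castSucc)
      = ∑ n, (Jstar d L ψ t).indicator (fun _ => (1 : ℝ)) (x n) := by
  simp only [sum_comp_equiv_subtype e fun v => (anchoredBox d t).indicator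
    (fun _ => (1 : ℝ)) fun i => v i.castSucc, Jstar_eq_inter_preimage, ← indicator_indicator]
  rfl

/-- Cavalieri: the vertical section over `z ∈ S` is `[0, ψ z / L]`. -/
lemma volume_lowerGraphOver (hL : 0 < L) (hmeas : Measurable ψ) (hψL : ∀ z, ψ z ≤ L)
    {S : Set (Fin d → ℝ)} (hS : MeasurableSet S) :
    volume (lowerGraphOver d L ψ S) = ∫⁻ z in S, ENNReal.ofReal (ψ z / L) := by
  let T : Set (ℝ × (Fin d → ℝ)) := {p | p.2 ∈ S ∧ p.1 ∈ Icc 0 1 ∧ L * p.1 ≤ ψ p.2}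
  have hT : MeasurableSet T :=
    (measurable_snd hS).inter ((measurable_fst measurableSet_Icc).inter
      (measurableSet_le (measurable_const.mul measurable_fst) (hmeas.comp measurable_snd)))
  let e := MeasurableEquiv.piFinSuccAbove (fun _ : Fin (d + 1) => ℝ) (Fin.last d)
  have hpre : lowerGraphOver d L ψ S = e ⁻¹' T := by
    ext x
    simp only [lowerGraphOver, mem_Icc, mem_ofPred_eq, MeasurableEquiv.piFinSuccAbove_apply,
      Fin.insertNthEquiv_last, preimage_ofPred_eq, Fin.snocEquiv_symm_apply, e, T]
    exact Iff.rfl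
  have hslice : ∀ z, volume ((fun u => (u, z)) ⁻¹' T)
      = S.indicator (fun z => ENNReal.ofReal (ψ z / L)) z := by
    intro z
    by_cases hz : z ∈ S
    · have hIcc : (fun u : ℝ => (u, z)) ⁻¹' T = Icc 0 (ψ z / L) := by
        ext u
        simp only [T, mem_preimage, mem_ofPred_eq, mem_Icc, hz, true_and, le_div_iff₀ hL]
        constructor
        · rintro ⟨⟨h0, -⟩, h⟩; exact ⟨h0, by linarith⟩
        · rintro ⟨h0, h⟩; refine ⟨⟨h0, ?_⟩, by linarith⟩
          nlinarith [hψL z]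
      simp [hIcc, hz]
    · have hempty : (fun u : ℝ => (u, z)) ⁻¹' T = ∅ := by
        ext u; simp [T, hz]
      simp [hempty, hz]
  rw [hpre, (volume_preserving_piFinSuccAbove (fun _ : Fin (d + 1) => ℝ)
    (Fin.last d)).measure_preimage hT.nullMeasurableSet, Measure.volume_eq_prod,
    Measure.prod_apply_symm hT, lintegral_congr hslice, lintegral_indicator hS]

lemma toReal_volume_lowerGraphOver (hL : 0 < L) (hmeas : Measurable ψ) (hpos : ∀ z, 0 ≤ ψ z)
    (hψL : ∀ z, ψ z ≤ L) {S : Set (Fin d → ℝ)} (hS : MeasurableSet S) :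
    (volume (lowerGraphOver d L ψ S)).toReal = (∫ z in S, ψ z) / L := by
  rw [volume_lowerGraphOver hL hmeas hψL hS, ← integral_div,
    integral_eq_lintegral_of_nonneg_ae (ae_of_all _ fun z => div_nonneg (hpos z) hL.le)
      (hmeas.div_const L).aestronglyMeasurable]

end LowerGraph

lemma pos_of_forall_le_of_setIntegral_pos {α : Type*} [MeasurableSpace α] {μ : Measure α}
    {f : α → ℝ} {S : Set α} {c : ℝ} (hS : MeasurableSet S) (hf : ∀ z, f z ≤ c)
    (hpos : 0 < ∫ z in S, f z ∂μ) : 0 < c := by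
  by_contra! hc
  exact hpos.not_ge (setIntegral_nonpos hS fun z _ => (hf z).trans hc)

lemma abs_div_sub_div_le {a b u v E : ℝ} (hb : 0 < b) (hv : 0 < v) (hu : 0 ≤ u) (huv : u ≤ v)
    (hau : |a - u| ≤ E) (hbv : |b - v| ≤ E) : |a / b - u / v| ≤ 2 * E / b := by
  have hr0 : 0 ≤ u / v := div_nonneg hu hv.le
  have hr1 : u / v ≤ 1 := (div_le_one hv).2 huv
  have hsplit : a / b - u / v = ((a - u) - u / v * (b - v)) / b := by
    field_simp
    ring
  rw [hsplit, abs_div, abs_of_pos hb]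
  gcongr
  calc |(a - u) - u / v * (b - v)| ≤ |a - u| + u / v * |b - v| := by
        rw [← abs_of_nonneg hr0, ← abs_mul, abs_of_nonneg hr0]; exact abs_sub _ _
    _ ≤ E + 1 * E := by gcongr
    _ = 2 * E := by ring

theorem acceptance_rejection_discrepancy_bound_general
    (d : ℕ) (L : ℝ) (ψ : (Fin d → ℝ) → ℝ)
    (hmeas : Measurable ψ) (hpos : ∀ z, 0 ≤ ψ z) (hL : ∀ z, ψ z ≤ L)
    (C : ℝ) (hC : C = ∫ z in unitCube d, ψ z) (hCpos : 0 < C)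
    (p q : ℕ)
    (hA : AdmissCover p q (lowerGraph d L ψ))
    (hJt : ∀ t ∈ unitCube d, ∃ p' q', p' ≤ p ∧ q ≤ q' ∧ AdmissCover p' q' (Jstar d L ψ t))
    (M N : ℕ) (hN : 0 < N)
    (x : Fin M → (Fin (d + 1) → ℝ))
    (e : Fin N ≃ {n : Fin M // x n ∈ lowerGraph d L ψ})
    (y : Fin N → (Fin d → ℝ)) (hy : ∀ k, y k = fun i => x (e k) i.castSucc) :
    ∀ t ∈ unitCube d,
      |(1 / (N : ℝ)) * (∑ k, Set.indicator (anchoredBox d t) (fun _ => (1 : ℝ)) (y k))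
          - (1 / C) * ∫ z in anchoredBox d t, ψ z|
        ≤ ((M : ℝ) / (N : ℝ)) * 2 * (2 * (p : ℝ) - q) * isoDisc M x := by
  intro t ht
  obtain rfl : y = fun k i => x (e k) i.castSucc := funext hy
  have hL0 : 0 < L :=
    pos_of_forall_le_of_setIntegral_pos (measurableSet_unitCube d) hL (hC ▸ hCpos)
  have hdiscA := empDisc_le_of_admissCover M x hA
  obtain ⟨p', q', hp', hq', hcovJ⟩ := hJt t ht
  have hdiscJ := empDisc_le_of_admissCover_of_le M x hcovJ hp' hq'
  have hvolA : (volume (lowerGraph d L ψ)).toReal = C / L := by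
    rw [lowerGraph_eq_lowerGraphOver, hC,
      toReal_volume_lowerGraphOver hL0 hmeas hpos hL (measurableSet_unitCube d)]
  have hvolJ : (volume (Jstar d L ψ t)).toReal = (∫ z in anchoredBox d t, ψ z) / L := by
    rw [Jstar_eq_lowerGraphOver ht,
      toReal_volume_lowerGraphOver hL0 hmeas hpos hL (measurableSet_anchoredBox d t)]
  have hvolJA : (volume (Jstar d L ψ t)).toReal ≤ (volume (lowerGraph d L ψ)).toReal :=
    ENNReal.toReal_mono (volume_ne_top_of_subset_unitCube fun _ h => h.1)
      (measure_mono inter_subset_right)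
  have hcountA : ∑ n, (lowerGraph d L ψ).indicator (fun _ => (1 : ℝ)) (x n) = N := by
    simpa using (sum_comp_equiv_subtype e fun _ => (1 : ℝ)).symm
  rw [empDisc, hcountA, hvolA] at hdiscA
  rw [empDisc, ← sum_indicator_anchoredBox_accepted e, hvolJ] at hdiscJ
  rw [hvolA, hvolJ] at hvolJA
  have hM : (0 : ℝ) < M := by exact_mod_cast Fin.pos (e ⟨0, hN⟩).val
  have hI : 0 ≤ ∫ z in anchoredBox d t, ψ z :=
    setIntegral_nonneg (measurableSet_anchoredBox d t) fun z _ => hpos z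
  calc _ ≤ 2 * ((2 * p - q) * isoDisc M x) / (1 / M * N) := by
        convert abs_div_sub_div_le (by positivity) (by positivity) (by positivity) hvolJA
          hdiscJ hdiscA using 3 <;> field_simp
    _ = _ := by field_simp

theorem acceptance_rejection_discrepancy_bound
    (d : ℕ) (hd : 1 ≤ d) (L : ℝ) (ψ : (Fin d → ℝ) → ℝ)
    (hmeas : Measurable ψ) (hpos : ∀ z, 0 ≤ ψ z) (hL : ∀ z, ψ z ≤ L)
    (C : ℝ) (hC : C = ∫ z in unitCube d, ψ z) (hCpos : 0 < C)
    (p q : ℕ)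
    (hA : AdmissCover p q (lowerGraph d L ψ))
    (hJt : ∀ t ∈ unitCube d, ∃ p' q', p' ≤ p ∧ q ≤ q' ∧ AdmissCover p' q' (Jstar d L ψ t))
    (M N : ℕ) (hN : 0 < N)
    (x : Fin M → (Fin (d + 1) → ℝ)) (hx : ∀ n, x n ∈ unitCube (d + 1))
    (e : Fin N ≃ {n : Fin M // x n ∈ lowerGraph d L ψ})
    (y : Fin N → (Fin d → ℝ)) (hy : ∀ k, y k = fun i => x (e k) i.castSucc) :
    ∀ t ∈ unitCube d,
      |(1 / (N : ℝ)) * (∑ k, Set.indicator (anchoredBox d t) (fun _ => (1 : ℝ)) (y k))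
          - (1 / C) * ∫ z in anchoredBox d t, ψ z|
        ≤ ((M : ℝ) / (N : ℝ)) * 2 * (2 * (p : ℝ) - q) * isoDisc M x :=
  acceptance_rejection_discrepancy_bound_general d L ψ hmeas hpos hL C hC hCpos p q hA hJt M N hN x
    e y hy
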